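/- Let X be a set, let t be a {∘, 1, D}-term over variables Σ, and let f assign to each variable in Σ a binary relation on X. Then for any x, y ∈ X the following are equivalent: (1) the pair (x, y) belongs to the relational interpretation of t under f; (2) there is a homomorphism of the tree ⟨t⟩ (viewed as a relational structure) into (X, f) mapping the root of ⟨t⟩ to x and the point of ⟨t⟩ to y. -/

import Mathlib

inductive PreTree (α : Type) : Type
  | node : Bool → List (α × PreTree α) → PreTree α

namespace PreTree

variable {α : Type}

def mark : PreTree α → Bool
  | node b _ => b

def children : PreTree α → List (α × PreTree α)
  | node _ cs => cs

def le : PreTree α → PreTree α → Prop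
  | node b₁ c₁, node b₂ c₂ =>
      (b₂ = true → b₁ = true) ∧
      ∀ q, q ∈ c₂ → ∃ p, p ∈ c₁ ∧ p.1 = q.1 ∧ le p.2 q.2
termination_by _ t₂ => sizeOf t₂
decreasing_by
  have h := List.sizeOf_lt_of_mem ‹q ∈ c₂›
  obtain ⟨qa, qt⟩ := q
  simp at h ⊢
  omega

-- The reduced form of a tree: reduce all child subtrees, then for each
-- label keep only the `≤`-minimal attached subtrees.
open scoped Classical in
noncomputable def reduce : PreTree α → PreTree α
  | node b cs =>
      let cs' : List (α × PreTree α) := cs.attach.map fun p => (p.1.1, reduce p.1.2)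
      node b (cs'.filter fun q =>
        decide (∀ q' ∈ cs', q'.1 = q.1 → le q'.2 q.2 → le q.2 q'.2))
termination_by t => sizeOf t
decreasing_by
  have h := List.sizeOf_lt_of_mem p.2
  obtain ⟨⟨pa, pt⟩, hp⟩ := p
  simp at h ⊢
  omega

/-- A tree is reduced if it equals its reduced form. -/
def Reduced (T : PreTree α) : Prop := reduce T = T

/-- The number of marked (point) vertices of a tree. -/
def markCount : PreTree α → ℕ
  | node b cs => (cond b 1 0) + (cs.attach.map fun p => markCount p.1.2).sum
termination_by t => sizeOf t
decreasing_by
  have h := List.sizeOf_lt_of_mem p.2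
  obtain ⟨⟨pa, pt⟩, hp⟩ := p
  simp at h ⊢
  omega

/-- A pointed tree: exactly one vertex is marked as the point. -/
def Pointed (T : PreTree α) : Prop := markCount T = 1

/-- Remove all point marks. -/
def unmark : PreTree α → PreTree α
  | node _ cs => node false (cs.attach.map fun p => (p.1.1, unmark p.1.2))
termination_by t => sizeOf t
decreasing_by
  have h := List.sizeOf_lt_of_mem p.2
  obtain ⟨⟨pa, pt⟩, hp⟩ := p
  simp at h ⊢
  omega

/-- Graft the tree `S` onto the point of `T` (identifying the point of `T`
with the root of `S`); the marks of `S` determine the new point. -/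
def graft (S : PreTree α) : PreTree α → PreTree α
  | node b cs =>
      if b then node S.mark (cs ++ S.children)
      else node b (cs.attach.map fun p => (p.1.1, graft S p.1.2))
termination_by t => sizeOf t
decreasing_by
  have h := List.sizeOf_lt_of_mem p.2
  obtain ⟨⟨pa, pt⟩, hp⟩ := p
  simp at h ⊢
  omega

/-- Move the point of `T` to its root. -/
def pointAtRoot (T : PreTree α) : PreTree α := node true (unmark T).children

/-- Pointed tree concatenation `T ∘ S`. -/
noncomputable def concat (T S : PreTree α) : PreTree α := reduce (graft S T)

/-- The domain operation `D(T)` on pointed trees. -/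
noncomputable def domTree (T : PreTree α) : PreTree α := reduce (pointAtRoot T)

/-- The trivial pointed tree: one vertex, both root and point. -/
def trivialTree : PreTree α := node true []

/-- The two-vertex pointed tree with a single `a`-labelled edge, point at the child. -/
def arrow (a : α) : PreTree α := node false [(a, node true [])]


/-- Set-theoretic equality of trees (children lists regarded as sets). -/
def eqv : PreTree α → PreTree α → Prop
  | node b₁ c₁, node b₂ c₂ =>
      b₁ = b₂ ∧
      (∀ p, p ∈ c₁ → ∃ q, q ∈ c₂ ∧ p.1 = q.1 ∧ eqv p.2 q.2) ∧
      (∀ q, q ∈ c₂ → ∃ p : {x // x ∈ c₁}, p.1.1 = q.1 ∧ eqv p.1.2 q.2)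
termination_by t₁ _ => sizeOf t₁
decreasing_by
  · have h₁ := List.sizeOf_lt_of_mem ‹p ∈ c₁›
    obtain ⟨pa, pt⟩ := p
    simp at h₁ ⊢
    omega
  · have h₁ := List.sizeOf_lt_of_mem p.2
    obtain ⟨⟨pa, pt⟩, hp⟩ := p
    simp at h₁ ⊢
    omega


/-- The subtree of `T` at position `p` (a list of child indices), if it exists. -/
def subAt : List ℕ → PreTree α → Option (PreTree α)
  | [], t => some t
  | i :: is, node _ cs => (cs[i]?).bind fun p => subAt is p.2

/-- `p` is a vertex of `T`. -/
def IsVertex (T : PreTree α) (p : List ℕ) : Prop := ∃ t, subAt p T = some t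

/-- The vertex `p` of `T` is the point (is marked). -/
def IsPoint (T : PreTree α) (p : List ℕ) : Prop :=
  ∃ t, subAt p T = some t ∧ t.mark = true

/-- There is an `a`-labelled edge of `T` from vertex `p` (the parent) to
vertex `q` (the child). -/
def Edge (T : PreTree α) (a : α) (p q : List ℕ) : Prop :=
  ∃ c, subAt p T = some c ∧ ∃ i t, c.children[i]? = some (a, t) ∧ q = p ++ [i]

theorem root_isVertex (T : PreTree α) : IsVertex T [] := ⟨T, rfl⟩

/-- A homomorphism of pointed labelled rooted trees from `S` to `T`:
a map of vertices preserving the labelled edge relations, sending the root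
to the root and points to points. -/
def HomTree (S T : PreTree α) : Prop :=
  ∃ θ : List ℕ → List ℕ,
    θ [] = [] ∧
    (∀ p, IsVertex S p → IsVertex T (θ p)) ∧
    (∀ a p q, Edge S a p q → Edge T a (θ p) (θ q)) ∧
    (∀ p, IsPoint S p → IsPoint T (θ p))

/-- A homomorphism of the pointed tree `T`, viewed as a relational structure,
into the relational structure `(X, f)`, mapping the root of `T` to `x` and
the point of `T` to `y`. -/
def HomInto {X : Type} (T : PreTree α) (f : α → X → X → Prop) (x y : X) : Prop :=
  ∃ θ : List ℕ → X,
    θ [] = x ∧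
    (∀ a p q, Edge T a p q → f a (θ p) (θ q)) ∧
    (∀ p, IsPoint T p → θ p = y)


end PreTree

namespace FreeKAD

/-- Terms of the signature `{∘, 1, D}`. -/
inductive Term1 (α : Type) : Type
  | var : α → Term1 α
  | one : Term1 α
  | comp : Term1 α → Term1 α → Term1 α
  | dom : Term1 α → Term1 α

/-- Terms of the signature `{∘, +, *, 0, 1, D}` (Kleene algebra with domain). -/
inductive TermK (α : Type) : Type
  | var : α → TermK α
  | zero : TermK α
  | one : TermK α
  | comp : TermK α → TermK α → TermK α
  | add : TermK α → TermK α → TermK α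
  | star : TermK α → TermK α
  | dom : TermK α → TermK α

variable {α : Type}

/-- The relational interpretation of a `{∘, 1, D}`-term over a set `X`,
under an assignment `f` of binary relations on `X` to the variables. -/
def rinterp1 {X : Type} (f : α → X → X → Prop) : Term1 α → X → X → Prop
  | .var a => f a
  | .one => fun x y => x = y
  | .comp s t => fun x y => ∃ z, rinterp1 f s x z ∧ rinterp1 f t z y
  | .dom s => fun x y => x = y ∧ ∃ z, rinterp1 f s x z

/-- The relational interpretation of a `{∘, +, *, 0, 1, D}`-term over a set `X`,
under an assignment `f` of binary relations on `X` to the variables. -/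
def rinterpK {X : Type} (f : α → X → X → Prop) : TermK α → X → X → Prop
  | .var a => f a
  | .zero => fun _ _ => False
  | .one => fun x y => x = y
  | .comp s t => fun x y => ∃ z, rinterpK f s x z ∧ rinterpK f t z y
  | .add s t => fun x y => rinterpK f s x y ∨ rinterpK f t x y
  | .star s => Relation.ReflTransGen (rinterpK f s)
  | .dom s => fun x y => x = y ∧ ∃ z, rinterpK f s x z

/-- Composition of binary relations. -/
def relComp {X : Type} (R S : X → X → Prop) : X → X → Prop :=
  fun x y => ∃ z, R x z ∧ S z y

/-- Union of binary relations. -/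
def relUnion {X : Type} (R S : X → X → Prop) : X → X → Prop :=
  fun x y => R x y ∨ S x y

/-- The domain operation on binary relations. -/
def relDom {X : Type} (R : X → X → Prop) : X → X → Prop :=
  fun x y => x = y ∧ ∃ z, R x z

/-- The identity relation. -/
def relId {X : Type} : X → X → Prop := fun x y => x = y

/-- The empty relation. -/
def relEmpty {X : Type} : X → X → Prop := fun _ _ => False

end FreeKAD

namespace FreeKAD

open PreTree

variable {α : Type}

/-- The single-tree interpretation of `{∘, 1, D}`-terms. -/
noncomputable def interp1 : Term1 α → PreTree α
  | .var a => arrow a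
  | .one => trivialTree
  | .comp s t => concat (interp1 s) (interp1 t)
  | .dom s => domTree (interp1 s)

/-- The set of `≤`-maximal elements of a set of trees. -/
def maximalSet (K : Set (PreTree α)) : Set (PreTree α) :=
  {T | T ∈ K ∧ ∀ S ∈ K, le T S → le S T}

/-- Elementwise lifting of pointed tree concatenation to sets of trees. -/
def liftComp (K L : Set (PreTree α)) : Set (PreTree α) :=
  {U | ∃ T ∈ K, ∃ S ∈ L, U = concat T S}

/-- Elementwise lifting of the domain operation to sets of trees. -/
def liftDom (K : Set (PreTree α)) : Set (PreTree α) :=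
  {U | ∃ T ∈ K, U = domTree T}

/-- Iterated lifted concatenation: `K^0 = {trivial}`, `K^(i+1) = K^i ∘ K`. -/
def powC (K : Set (PreTree α)) : ℕ → Set (PreTree α)
  | 0 => {trivialTree}
  | i + 1 => liftComp (powC K i) K

/-- The standard tree interpretation of `{∘, +, *, 0, 1, D}`-terms. -/
def sinterp : TermK α → Set (PreTree α)
  | .var a => {arrow a}
  | .zero => ∅
  | .one => {trivialTree}
  | .comp s t => maximalSet (liftComp (sinterp s) (sinterp t))
  | .add s t => maximalSet (sinterp s ∪ sinterp t)
  | .star s => maximalSet (⋃ i : ℕ, powC (sinterp s) (i + 1))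
  | .dom s => maximalSet (liftDom (sinterp s))

/-- Equality of sets of trees, with trees compared as (hereditarily finite) sets. -/
def SetEqv (K L : Set (PreTree α)) : Prop :=
  (∀ T ∈ K, ∃ S ∈ L, eqv T S) ∧ (∀ S ∈ L, ∃ T ∈ K, eqv T S)

/-- A set of reduced pointed trees is regular if it is the standard tree
interpretation of some `{∘, +, *, 0, 1, D}`-term. -/
def Regular (L : Set (PreTree α)) : Prop := ∃ t : TermK α, L = sinterp t

/-- The set of reduced trees lying `≤`-below some member of `L`. -/
def down (L : Set (PreTree α)) : Set (PreTree α) :=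
  {T | Reduced T ∧ ∃ S ∈ L, le T S}

end FreeKAD

/-!
Let `HomIntoSet T f x P` say that some homomorphism of `T` into `(X, f)` sends the root to `x`
and the points into `P`; it unfolds recursively over the children of the root. It is invariant
under reduction, since a tree and its reduct map homomorphically into each other. Grafting `S`
onto the only point of `T` replaces `P` by the set of possible images of the root of `S`, and
moving the point to the root replaces the condition on the point by `x ∈ P`. So by induction on
`t` (which also shows that `⟨t⟩` has exactly one point), `HomIntoSet ⟨t⟩ f x P` holds iff
`(x, y)` lies in the interpretation of `t` for some `y ∈ P`; take `P = {y}`.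
-/

namespace PreTree

variable {α X : Type} {f : α → X → X → Prop}

theorem node_induction {motive : PreTree α → Prop}
    (node : ∀ b cs, (∀ q ∈ cs, motive q.2) → motive (node b cs)) (T : PreTree α) : motive T :=
  match T with
  | .node b cs => node b cs fun q _ => node_induction node q.2
termination_by sizeOf T
decreasing_by
  have := List.sizeOf_lt_of_mem ‹q ∈ cs›
  obtain ⟨a, t⟩ := q
  simp at this ⊢
  omega

@[simp] theorem mark_node (b : Bool) (cs : List (α × PreTree α)) : (node b cs).mark = b := rfl

@[simp] theorem children_node (b : Bool) (cs : List (α × PreTree α)) :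
    (node b cs).children = cs := rfl

theorem le_node {b₁ b₂ : Bool} {c₁ c₂ : List (α × PreTree α)} :
    le (node b₁ c₁) (node b₂ c₂) ↔
      (b₂ = true → b₁ = true) ∧ ∀ q ∈ c₂, ∃ p ∈ c₁, p.1 = q.1 ∧ le p.2 q.2 := by
  rw [le]

theorem markCount_node (b : Bool) (cs : List (α × PreTree α)) :
    markCount (node b cs) = cond b 1 0 + (cs.map fun q => markCount q.2).sum := by
  rw [markCount, List.attach_map_val (f := fun q : α × PreTree α => markCount q.2)]

theorem unmark_node (b : Bool) (cs : List (α × PreTree α)) :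
    unmark (node b cs) = node false (cs.map fun q => (q.1, unmark q.2)) := by
  rw [unmark, List.attach_map_val (f := fun q : α × PreTree α => (q.1, unmark q.2))]

theorem graft_node_true (S : PreTree α) (cs : List (α × PreTree α)) :
    graft S (node true cs) = node S.mark (cs ++ S.children) := by
  rw [graft, if_pos rfl]

theorem graft_node_false (S : PreTree α) (cs : List (α × PreTree α)) :
    graft S (node false cs) = node false (cs.map fun q => (q.1, graft S q.2)) := by
  rw [graft, if_neg Bool.false_ne_true,
    List.attach_map_val (f := fun q : α × PreTree α => (q.1, graft S q.2))]

open scoped Classical in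
theorem reduce_node (b : Bool) (cs : List (α × PreTree α)) :
    reduce (node b cs) =
      let cs' := cs.map fun q => (q.1, reduce q.2)
      node b (cs'.filter fun q => ∀ q' ∈ cs', q'.1 = q.1 → le q'.2 q.2 → le q.2 q'.2) := by
  rw [reduce, List.attach_map_val (f := fun q : α × PreTree α => (q.1, reduce q.2))]

-- `S ≤ T` iff there is a homomorphism of pointed trees from `T` to `S`.
instance : Preorder (PreTree α) where
  le := le
  le_refl T := by
    induction T using node_induction with
    | node b cs ih => exact le_node.2 ⟨id, fun q hq => ⟨q, hq, rfl, ih q hq⟩⟩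
  le_trans T₁ T₂ T₃ := by
    induction T₃ using node_induction generalizing T₁ T₂ with
    | node b₃ c₃ ih =>
      obtain ⟨b₁, c₁⟩ := T₁
      obtain ⟨b₂, c₂⟩ := T₂
      intro h₁₂ h₂₃
      obtain ⟨hb₁₂, hc₁₂⟩ := le_node.1 h₁₂
      obtain ⟨hb₂₃, hc₂₃⟩ := le_node.1 h₂₃
      refine le_node.2 ⟨hb₁₂ ∘ hb₂₃, fun q hq => ?_⟩
      obtain ⟨p₂, hp₂, hl₂, hle₂⟩ := hc₂₃ q hq
      obtain ⟨p₁, hp₁, hl₁, hle₁⟩ := hc₁₂ p₂ hp₂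
      exact ⟨p₁, hp₁, hl₁.trans hl₂, ih q hq _ _ hle₁ hle₂⟩

open scoped Classical in
theorem reduce_le_and_le_reduce (T : PreTree α) : reduce T ≤ T ∧ T ≤ reduce T := by
  induction T using node_induction with
  | node b cs ih =>
    rw [reduce_node]
    set cs' := cs.map fun q => (q.1, reduce q.2)
    constructor
    · refine le_node.2 ⟨id, fun q hq => ?_⟩
      have hfin : {t | (q.1, t) ∈ cs'}.Finite :=
        (cs'.finite_toSet.image Prod.snd).subset fun t ht => ⟨_, ht, rfl⟩
      obtain ⟨m, hmq, hm, hmin⟩ := hfin.exists_le_minimal (a := reduce q.2)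
        (show (q.1, reduce q.2) ∈ cs' from List.mem_map_of_mem hq)
      refine ⟨(q.1, m), List.mem_filter.2 ⟨hm, ?_⟩, rfl, le_trans hmq (ih q hq).1⟩
      exact decide_eq_true fun q' hq' hl => hmin (show (q.1, q'.2) ∈ cs' by rw [← hl]; exact hq')
    · refine le_node.2 ⟨id, fun q hq => ?_⟩
      obtain ⟨p, hp, rfl⟩ := List.mem_map.1 (List.mem_of_mem_filter hq)
      exact ⟨p, hp, rfl, (ih p hp).2⟩

theorem markCount_le_of_mem {b : Bool} {cs : List (α × PreTree α)} {q : α × PreTree α}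
    (hq : q ∈ cs) : markCount q.2 ≤ markCount (node b cs) := by
  rw [markCount_node]
  exact (List.le_sum_of_mem (List.mem_map_of_mem (f := fun q => markCount q.2) hq)).trans
    (Nat.le_add_left _ _)

theorem markCount_unmark (T : PreTree α) : markCount (unmark T) = 0 := by
  induction T using node_induction with
  | node b cs ih =>
    rw [unmark_node, markCount_node, List.map_map, cond_false, zero_add, List.sum_eq_zero_iff]
    simp only [List.mem_map, Function.comp_apply]
    rintro _ ⟨q, hq, rfl⟩
    exact ih q hq

theorem markCount_pointAtRoot (T : PreTree α) : markCount (pointAtRoot T) = 1 := by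
  have h := markCount_unmark T
  rw [pointAtRoot, markCount_node]
  generalize unmark T = U at h ⊢
  obtain ⟨b, cs⟩ := U
  rw [markCount_node] at h
  simp_all

theorem graft_eq_self_of_markCount_eq_zero (S : PreTree α) {T : PreTree α}
    (hT : markCount T = 0) : graft S T = T := by
  induction T using node_induction with
  | node b cs ih =>
    cases b
    · rw [graft_node_false]
      congr 1
      refine (List.map_congr_left fun q hq => ?_).trans (List.map_id' cs)
      rw [ih q hq (Nat.eq_zero_of_le_zero (hT ▸ markCount_le_of_mem hq))]
    · simp [markCount_node] at hT

theorem markCount_graft {S : PreTree α} (hS : markCount S = 1) (T : PreTree α) :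
    markCount (graft S T) = markCount T := by
  induction T using node_induction with
  | node b cs ih =>
    cases b
    · rw [graft_node_false, markCount_node, markCount_node, List.map_map]
      exact congrArg (_ + ·.sum) (List.map_congr_left ih)
    · obtain ⟨c, ds⟩ := S
      rw [markCount_node] at hS
      simp only [graft_node_true, markCount_node, mark_node, children_node, List.map_append,
        List.sum_append]
      cases c <;> simp only [cond_true, cond_false] at hS ⊢ <;> omega

theorem markCount_reduce_le (T : PreTree α) : markCount (reduce T) ≤ markCount T := by
  induction T using node_induction with
  | node b cs ih =>
    rw [reduce_node, markCount_node, markCount_node]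
    gcongr
    refine ((List.filter_sublist.map _).sum_le_sum fun _ _ => Nat.zero_le _).trans ?_
    rw [List.map_map]
    exact List.sum_le_sum fun q hq => ih q hq

theorem markCount_pos_of_le {S T : PreTree α} (hle : S ≤ T) (hT : 0 < markCount T) :
    0 < markCount S := by
  induction T using node_induction generalizing S with
  | node b₂ c₂ ih =>
    obtain ⟨b₁, c₁⟩ := S
    obtain ⟨hb, hc⟩ := le_node.1 hle
    cases b₂
    · rw [markCount_node] at hT
      obtain ⟨_, hm, hpos⟩ := List.exists_mem_ne_zero_of_sum_ne_zero (by simpa using hT.ne')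
      obtain ⟨q, hq, rfl⟩ := List.mem_map.1 hm
      obtain ⟨p, hp, -, hpq⟩ := hc q hq
      exact (ih q hq hpq (Nat.pos_of_ne_zero hpos)).trans_le (markCount_le_of_mem hp)
    · simp [markCount_node, hb rfl]

theorem Pointed.reduce {T : PreTree α} (hT : Pointed T) : Pointed (reduce T) :=
  le_antisymm (hT ▸ markCount_reduce_le T)
    (markCount_pos_of_le (reduce_le_and_le_reduce T).1 (hT ▸ Nat.one_pos))

theorem isPoint_nil {T : PreTree α} : IsPoint T [] ↔ T.mark = true := by
  simp [IsPoint, subAt]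

theorem isPoint_cons {b : Bool} {cs : List (α × PreTree α)} {i : ℕ} {p : List ℕ} :
    IsPoint (node b cs) (i :: p) ↔ ∃ q, cs[i]? = some q ∧ IsPoint q.2 p := by
  simp only [IsPoint, subAt, Option.bind_eq_some_iff]
  constructor
  · rintro ⟨t, ⟨q, hq, ht⟩, hmark⟩
    exact ⟨q, hq, t, ht, hmark⟩
  · rintro ⟨q, hq, t, ht, hmark⟩
    exact ⟨t, ⟨q, hq, ht⟩, hmark⟩

theorem edge_nil {T : PreTree α} {a : α} {p : List ℕ} :
    Edge T a [] p ↔ ∃ i t, T.children[i]? = some (a, t) ∧ p = [i] := by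
  simp [Edge, subAt]

theorem edge_cons {b : Bool} {cs : List (α × PreTree α)} {a : α} {i : ℕ} {p p' : List ℕ} :
    Edge (node b cs) a (i :: p) p' ↔
      ∃ q, cs[i]? = some q ∧ ∃ p'', Edge q.2 a p p'' ∧ p' = i :: p'' := by
  simp only [Edge, subAt, Option.bind_eq_some_iff]
  constructor
  · rintro ⟨c, ⟨q, hq, hc⟩, j, t, hj, rfl⟩
    exact ⟨q, hq, p ++ [j], ⟨c, hc, j, t, hj, rfl⟩, rfl⟩
  · rintro ⟨q, hq, p'', ⟨c, hc, j, t, hj, rfl⟩, rfl⟩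
    exact ⟨c, ⟨q, hq, hc⟩, j, t, hj, rfl⟩

def IsHomInto (T : PreTree α) (f : α → X → X → Prop) (P : Set X) (θ : List ℕ → X) : Prop :=
  (∀ a p q, Edge T a p q → f a (θ p) (θ q)) ∧ ∀ p, IsPoint T p → θ p ∈ P

def HomIntoSet (T : PreTree α) (f : α → X → X → Prop) (x : X) (P : Set X) : Prop :=
  ∃ θ : List ℕ → X, θ [] = x ∧ IsHomInto T f P θ

theorem homInto_iff_homIntoSet {T : PreTree α} {x y : X} :
    HomInto T f x y ↔ HomIntoSet T f x {y} := Iff.rfl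

theorem IsHomInto.restrict {b : Bool} {cs : List (α × PreTree α)}
    {P : Set X} {θ : List ℕ → X} (hθ : IsHomInto (node b cs) f P θ) {i : ℕ}
    {q : α × PreTree α} (hq : cs[i]? = some q) : IsHomInto q.2 f P fun p => θ (i :: p) :=
  ⟨fun _ _ _ he => hθ.1 _ _ _ (edge_cons.2 ⟨q, hq, _, he, rfl⟩),
    fun _ hp => hθ.2 _ (isPoint_cons.2 ⟨q, hq, hp⟩)⟩

theorem homIntoSet_node {b : Bool} {cs : List (α × PreTree α)}
    {x : X} {P : Set X} :
    HomIntoSet (node b cs) f x P ↔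
      (b = true → x ∈ P) ∧ ∀ q ∈ cs, ∃ z, f q.1 x z ∧ HomIntoSet q.2 f z P := by
  constructor
  · rintro ⟨θ, rfl, hθ⟩
    refine ⟨fun hb => hθ.2 [] (isPoint_nil.2 hb), fun q hq => ?_⟩
    obtain ⟨i, hi⟩ := List.mem_iff_getElem?.1 hq
    exact ⟨θ [i], hθ.1 _ _ _ (edge_nil.2 ⟨i, q.2, hi, rfl⟩), _, rfl, hθ.restrict hi⟩
  · rintro ⟨hb, hcs⟩
    have : ∀ i : ℕ, ∃ θ : List ℕ → X, ∀ q : α × PreTree α, cs[i]? = some q →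
        f q.1 x (θ []) ∧ IsHomInto q.2 f P θ := by
      intro i
      cases hi : cs[i]? with
      | none => exact ⟨fun _ => x, by simp⟩
      | some q =>
        obtain ⟨z, hz, θ, rfl, hθ⟩ := hcs q (List.mem_iff_getElem?.2 ⟨i, hi⟩)
        exact ⟨θ, by simp [hz, hθ]⟩
    choose θ hθ using this
    refine ⟨fun | [] => x | i :: p => θ i p, rfl, fun a p p' he => ?_, fun p hp => ?_⟩
    · cases p with
      | nil =>
        obtain ⟨i, t, hi, rfl⟩ := edge_nil.1 he
        exact (hθ i _ hi).1
      | cons i p =>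
        obtain ⟨q, hq, p'', he', rfl⟩ := edge_cons.1 he
        exact (hθ i q hq).2.1 _ _ _ he'
    · cases p with
      | nil => exact hb (isPoint_nil.1 hp)
      | cons i p =>
        obtain ⟨q, hq, hp'⟩ := isPoint_cons.1 hp
        exact (hθ i q hq).2.2 p hp'

theorem HomIntoSet.of_le {S T : PreTree α} {x : X} {P : Set X}
    (hle : S ≤ T) (hS : HomIntoSet S f x P) : HomIntoSet T f x P := by
  induction T using node_induction generalizing S x with
  | node b₂ c₂ ih =>
    obtain ⟨b₁, c₁⟩ := S
    obtain ⟨hb, hc⟩ := le_node.1 hle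
    obtain ⟨hxb, hcS⟩ := homIntoSet_node.1 hS
    refine homIntoSet_node.2 ⟨hxb ∘ hb, fun q hq => ?_⟩
    obtain ⟨p, hp, hl, hpq⟩ := hc q hq
    obtain ⟨z, hz, hpz⟩ := hcS p hp
    exact ⟨z, hl ▸ hz, ih q hq hpq hpz⟩

theorem homIntoSet_reduce {T : PreTree α} {x : X} {P : Set X} :
    HomIntoSet (reduce T) f x P ↔ HomIntoSet T f x P :=
  ⟨.of_le (reduce_le_and_le_reduce T).1, .of_le (reduce_le_and_le_reduce T).2⟩

theorem homIntoSet_node_true {cs : List (α × PreTree α)} {x : X} {P : Set X} :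
    HomIntoSet (node true cs) f x P ↔ x ∈ P ∧ HomIntoSet (node false cs) f x P := by
  simp [homIntoSet_node]

theorem homIntoSet_unmark {T : PreTree α} {x : X} {P : Set X} :
    HomIntoSet (unmark T) f x P ↔ HomIntoSet T f x Set.univ := by
  induction T using node_induction generalizing x with
  | node b cs ih =>
    simp only [unmark_node, homIntoSet_node, List.forall_mem_map, Set.mem_univ, implies_true,
      Bool.false_eq_true, false_implies, true_and]
    exact forall₂_congr fun q hq => exists_congr fun z => and_congr_right' (ih q hq)

theorem homIntoSet_pointAtRoot {T : PreTree α} {x : X} {P : Set X} :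
    HomIntoSet (pointAtRoot T) f x P ↔ x ∈ P ∧ HomIntoSet T f x Set.univ := by
  obtain ⟨b, cs⟩ := T
  rw [pointAtRoot, homIntoSet_node_true, unmark_node, children_node, ← unmark_node b,
    homIntoSet_unmark]

theorem homIntoSet_graft {S T : PreTree α} (hT : markCount T ≤ 1) {x : X} {P : Set X} :
    HomIntoSet (graft S T) f x P ↔ HomIntoSet T f x {z | HomIntoSet S f z P} := by
  induction T using node_induction generalizing x with
  | node b cs ih =>
    have hchild : ∀ q ∈ cs, markCount q.2 ≤ 1 := fun q hq => (markCount_le_of_mem hq).trans hT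
    cases b
    · simp only [graft_node_false, homIntoSet_node, List.forall_mem_map, Bool.false_eq_true,
        false_implies, true_and]
      exact forall₂_congr fun q hq => exists_congr fun z =>
        and_congr_right' (ih q hq (hchild q hq))
    · have hsum : (cs.map fun q => markCount q.2).sum = 0 := by
        rw [markCount_node, cond_true] at hT
        omega
      have hzero : ∀ q ∈ cs, markCount q.2 = 0 := fun q hq =>
        List.sum_eq_zero_iff.1 hsum _ (List.mem_map_of_mem hq)
      have hcs : ∀ q ∈ cs, ∀ z,
          HomIntoSet q.2 f z P ↔ HomIntoSet q.2 f z {z | HomIntoSet S f z P} := fun q hq z => by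
          simpa only [graft_eq_self_of_markCount_eq_zero S (hzero q hq)] using ih q hq (hchild q hq)
      obtain ⟨c, ds⟩ := S
      rw [graft_node_true, homIntoSet_node, homIntoSet_node (b := true), Set.mem_ofPred_eq,
        homIntoSet_node (b := c)]
      simp only [mark_node, children_node, List.forall_mem_append, true_implies]
      rw [forall₂_congr fun q hq => exists_congr fun z => and_congr_right' (hcs q hq z)]
      tauto

end PreTree

namespace FreeKAD

open PreTree

variable {α X : Type}

theorem pointed_interp1 (t : Term1 α) : Pointed (interp1 t) := by
  induction t with
  | var a => simp [PreTree.Pointed, interp1, arrow, markCount_node]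
  | one => simp [PreTree.Pointed, interp1, trivialTree, markCount_node]
  | comp s t ihs iht => exact Pointed.reduce ((markCount_graft iht _).trans ihs)
  | dom s => exact Pointed.reduce (markCount_pointAtRoot _)

theorem homIntoSet_interp1 (f : α → X → X → Prop) (t : Term1 α) (x : X) (P : Set X) :
    HomIntoSet (interp1 t) f x P ↔ ∃ y, rinterp1 f t x y ∧ y ∈ P := by
  induction t generalizing x P with
  | var a => simp [interp1, arrow, rinterp1, homIntoSet_node]
  | one => simp [interp1, trivialTree, rinterp1, homIntoSet_node]
  | comp s t ihs iht =>
    rw [interp1, concat, homIntoSet_reduce, homIntoSet_graft (pointed_interp1 s).le, ihs]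
    simp only [Set.mem_ofPred_eq, iht]
    exact ⟨fun ⟨z, hxz, y, hzy, hy⟩ => ⟨y, ⟨z, hxz, hzy⟩, hy⟩,
      fun ⟨y, ⟨z, hxz, hzy⟩, hy⟩ => ⟨z, hxz, y, hzy, hy⟩⟩
  | dom s ihs =>
    rw [interp1, domTree, homIntoSet_reduce, homIntoSet_pointAtRoot, ihs]
    simp [rinterp1, and_comm]

/-- Let `X` be a set, `t` a `{∘, 1, D}`-term over variables
`Σ`, and `f` an assignment of binary relations on `X` to the variables. Then
for any `x, y ∈ X`: the pair `(x, y)` belongs to the relational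
interpretation of `t` under `f` iff there is a homomorphism of the tree
`⟨t⟩` (viewed as a relational structure) into `(X, f)` mapping the root of
`⟨t⟩` to `x` and the point of `⟨t⟩` to `y`. -/
theorem rinterp1_iff_homInto {α X : Type} (f : α → X → X → Prop)
    (t : Term1 α) (x y : X) :
    rinterp1 f t x y ↔ HomInto (interp1 t) f x y := by
  rw [homInto_iff_homIntoSet, homIntoSet_interp1]
  simp

end FreeKAD
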